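/- arXiv:2406.01504 — 6 statements merged into one kernel-verified Lean document; each statement's English description precedes it below -/
import Mathlib

section
/- Every Šoltés hypergraph of order 5 is isomorphic to the hypergraph on vertex set {0,1,2,3,4} whose edges are the five pairs {i, i+1 mod 5} for i = 0,...,4 together with the full set {0,1,2,3,4}; in particular, the Šoltés hypergraph of minimum order is unique and has order 5. -/
/-!
Deleting a vertex of a Šoltés hypergraph `H` of order `n` leaves a connected hypergraph `H \ v`
of order `n - 1` whose Wiener index is `W(H) ≥ C(n, 2)`. If all distances in a connected
hypergraph of order `m` are at most `2`, its Wiener index is at most `(m - 1)²`, because the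
shortest-path parents of the vertices give `m - 1` adjacent pairs. Since `(n - 2)² < C(n, 2)` for
`n ≤ 5`, each `H \ v` then has two vertices at distance at least `3`; as distances in `H \ v`
are at most `n - 2`, this forces `n ≥ 5`.

For `n = 5`, two vertices at distance `3` in `H \ v` make its 2-section a path `P₄`. Hence
`W(H) = W(H \ v) ≤ 10 = C(5, 2)`, so the 2-section of `H` is complete, and since `P₄` is
triangle-free, every edge of `H` is a pair or the whole vertex set. If `H \ x₀` is the path
`u - a - b - w`, connectivity of `H \ a` and `H \ b` forces the pairs `x₀u` and `x₀w`, and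
triangle-freeness of `H \ a` and `H \ b` rules out `x₀b` and `x₀a`. So the pairs form the
5-cycle `x₀ u a b w`, and completeness forces the full edge.
-/

variable {α : Type*} {β : Type*}

/-- A hypergraph: a finite vertex set together with a set of edges,
each an at-least-2-element subset of the vertex set. -/
structure SHypergraph (α : Type*) where
  verts : Finset α
  edges : Finset (Finset α)
  edge_sub : ∀ e ∈ edges, e ⊆ verts
  edge_card : ∀ e ∈ edges, 2 ≤ e.card

namespace SHypergraph

/-- The 2-section graph of a hypergraph: two distinct vertices are adjacent
iff some edge contains both. -/
def twoSection (H : SHypergraph α) : SimpleGraph α where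
  Adj u v := u ≠ v ∧ ∃ e ∈ H.edges, u ∈ e ∧ v ∈ e
  symm := by
    constructor
    rintro u v ⟨huv, e, he, hu, hv⟩
    exact ⟨huv.symm, e, he, hv, hu⟩
  loopless := by
    constructor
    rintro u ⟨h, -⟩
    exact h rfl

/-- Distance between two vertices: graph distance in the 2-section. -/
noncomputable def dist (H : SHypergraph α) (u v : α) : ℕ :=
  H.twoSection.dist u v

/-- A hypergraph is connected if every two of its vertices are joined by a path. -/
def Connected (H : SHypergraph α) : Prop :=
  ∀ u ∈ H.verts, ∀ v ∈ H.verts, H.twoSection.Reachable u v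

/-- The Wiener index (total distance): the sum of distances over all
unordered pairs of distinct vertices. -/
noncomputable def wiener [DecidableEq α] (H : SHypergraph α) : ℕ :=
  ∑ p ∈ H.verts.sym2.filter (fun p => ¬ p.IsDiag),
    Sym2.lift ⟨fun u v => H.dist u v, fun _ _ => SimpleGraph.dist_comm⟩ p

/-- Vertex deletion: remove the vertex and all edges containing it. -/
def delete [DecidableEq α] (H : SHypergraph α) (v : α) : SHypergraph α where
  verts := H.verts.erase v
  edges := H.edges.filter fun e => v ∉ e
  edge_sub := by
    intro e he x hx
    rw [Finset.mem_filter] at he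
    exact Finset.mem_erase.mpr ⟨fun h => he.2 (h ▸ hx), H.edge_sub e he.1 hx⟩
  edge_card := fun e he => H.edge_card e (Finset.mem_filter.mp he).1

/-- A Šoltés hypergraph: a connected hypergraph on at least 2 vertices such that
deleting any vertex leaves a connected hypergraph with the same Wiener index. -/
def IsSoltes [DecidableEq α] (H : SHypergraph α) : Prop :=
  2 ≤ H.verts.card ∧ H.Connected ∧
    ∀ v ∈ H.verts, (H.delete v).Connected ∧ (H.delete v).wiener = H.wiener

/-- The diameter: the maximum distance over unordered pairs of distinct vertices. -/
noncomputable def diam [DecidableEq α] (H : SHypergraph α) : ℕ :=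
  H.verts.offDiag.sup fun p => H.dist p.1 p.2

/-- The degree of a vertex: the number of edges containing it. -/
def degree [DecidableEq α] (H : SHypergraph α) (v : α) : ℕ :=
  (H.edges.filter fun e => v ∈ e).card

/-- SHypergraph isomorphism: a bijection between the vertex sets mapping
edges onto edges. -/
def IsIsoTo [DecidableEq β] (H : SHypergraph α) (H' : SHypergraph β) : Prop :=
  ∃ f : α → β, Set.InjOn f ↑H.verts ∧ H'.verts = H.verts.image f ∧
    H'.edges = H.edges.image fun e => e.image f

end SHypergraph

/-- The 5-cycle together with one hyperedge containing all 5 vertices. -/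
def cycleFivePlus : SHypergraph (Fin 5) where
  verts := Finset.univ
  edges := (Finset.univ.image fun i : Fin 5 => ({i, i + 1} : Finset (Fin 5))) ∪ {Finset.univ}
  edge_sub := by decide
  edge_card := by decide

open Finset SimpleGraph

namespace Finset

variable [DecidableEq α]

theorem card_sym2_filter_not_isDiag (s : Finset α) :
    (s.sym2.filter (fun p => ¬ p.IsDiag)).card = s.card.choose 2 := by
  rw [sym2_eq_image, Sym2.filter_image_mk_not_isDiag, Sym2.card_image_offDiag]

theorem forall_mem_sym2_filter_not_isDiag {s : Finset α} {P : Sym2 α → Prop} :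
    (∀ p ∈ s.sym2.filter (fun p => ¬ p.IsDiag), P p) ↔
      ∀ x ∈ s, ∀ y ∈ s, x ≠ y → P s(x, y) := by
  refine ⟨fun h x hx y hy hxy => h _ (by simp [hx, hy, hxy]), fun h p hp => ?_⟩
  induction p using Sym2.ind with
  | _ x y =>
    simp only [mem_filter, mk_mem_sym2_iff, Sym2.mk_isDiag_iff] at hp
    exact h x hp.1.1 y hp.1.2 hp.2

theorem sum_sym2_filter_not_isDiag_insert {M : Type*} [AddCommMonoid M] (f : Sym2 α → M)
    {x : α} {s : Finset α} (hx : x ∉ s) :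
    ∑ p ∈ (insert x s).sym2.filter (fun p => ¬ p.IsDiag), f p =
      ∑ y ∈ s, f s(x, y) + ∑ p ∈ s.sym2.filter (fun p => ¬ p.IsDiag), f p := by
  have hdisj : Disjoint (((insert x s).image fun y => s(x, y)).filter fun p => ¬ p.IsDiag)
      (s.sym2.filter fun p => ¬ p.IsDiag) := by
    refine disjoint_filter_filter (disjoint_left.2 ?_)
    rintro _ hp hps
    obtain ⟨y, -, rfl⟩ := mem_image.1 hp
    exact hx (mk_mem_sym2_iff.1 hps).1
  have hfilt : (insert x s).filter (fun y => ¬ s(x, y).IsDiag) = s := by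
    ext y
    simp only [mem_filter, mem_insert, Sym2.mk_isDiag_iff]
    constructor
    · rintro ⟨rfl | hy, hxy⟩
      exacts [absurd rfl hxy, hy]
    · exact fun hy => ⟨Or.inr hy, fun hxy => hx (hxy ▸ hy)⟩
  rw [sym2_insert, filter_union, sum_union hdisj, filter_image, hfilt,
    sum_image fun _ _ _ _ h => Sym2.congr_right.1 h]

end Finset

theorem SimpleGraph.Reachable.exists_adj_dist_lt {G : SimpleGraph α} {u v : α}
    (h : G.Reachable u v) (hne : u ≠ v) : ∃ w, G.Adj u w ∧ G.dist w v < G.dist u v := by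
  obtain ⟨p, hp⟩ := h.exists_walk_length_eq_dist
  cases p with
  | nil => exact absurd rfl hne
  | cons hadj q =>
    refine ⟨_, hadj, (dist_le q).trans_lt ?_⟩
    rw [← hp, Walk.length_cons]
    exact Nat.lt_succ_self _

namespace SHypergraph

variable {H : SHypergraph α} {u v w x y a b x0 : α}

theorem mem_verts_of_adj (h : H.twoSection.Adj u v) : u ∈ H.verts ∧ v ∈ H.verts := by
  obtain ⟨-, e, he, hu, hv⟩ := h
  exact ⟨H.edge_sub e he hu, H.edge_sub e he hv⟩

theorem support_subset_verts (p : H.twoSection.Walk u v) (hu : u ∈ H.verts) :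
    ∀ x ∈ p.support, x ∈ H.verts := by
  induction p with
  | nil => simpa using hu
  | cons h q ih =>
    simp only [Walk.support_cons, List.mem_cons, forall_eq_or_imp]
    exact ⟨hu, ih (mem_verts_of_adj h).2⟩

theorem dist_le_card_sub_one (hu : u ∈ H.verts) (hr : H.twoSection.Reachable u v) :
    H.dist u v ≤ H.verts.card - 1 := by
  classical
  obtain ⟨p, hp, hlen⟩ := hr.exists_path_of_dist
  have hcard : p.support.toFinset.card ≤ H.verts.card :=
    card_le_card fun x hx => support_subset_verts p hu x (List.mem_toFinset.1 hx)
  rw [List.toFinset_card_of_nodup hp.support_nodup, Walk.length_support, hlen] at hcard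
  unfold SHypergraph.dist
  omega

variable [DecidableEq α]

theorem card_verts_delete (hv : v ∈ H.verts) :
    (H.delete v).verts.card = H.verts.card - 1 :=
  card_erase_of_mem hv

theorem choose_two_le_wiener (hc : H.Connected) : H.verts.card.choose 2 ≤ H.wiener := by
  rw [← card_sym2_filter_not_isDiag, card_eq_sum_ones, wiener]
  exact sum_le_sum <| forall_mem_sym2_filter_not_isDiag.2 fun p hp q hq hpq =>
    (hc p hp q hq).pos_dist_of_ne hpq

theorem adj_of_wiener_le_choose_two (hc : H.Connected) (hW : H.wiener ≤ H.verts.card.choose 2)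
    (hx : x ∈ H.verts) (hy : y ∈ H.verts) (hxy : x ≠ y) : H.twoSection.Adj x y := by
  by_contra hnadj
  refine hW.not_gt ?_
  rw [← card_sym2_filter_not_isDiag, card_eq_sum_ones, wiener]
  refine sum_lt_sum (forall_mem_sym2_filter_not_isDiag.2 fun p hp q hq hpq =>
    (hc p hp q hq).pos_dist_of_ne hpq) ⟨s(x, y), by simp [hx, hy, hxy], ?_⟩
  exact (hc x hx y hy).one_lt_dist_of_ne_of_not_adj hxy hnadj

theorem exists_card_verts_sub_one_adjacent_pairs (hc : H.Connected) {r : α}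
    (hr : r ∈ H.verts) :
    ∃ T ⊆ H.verts.sym2.filter (fun p => ¬ p.IsDiag), T.card = H.verts.card - 1 ∧
      ∀ p ∈ T, p ∈ H.twoSection.edgeSet := by
  have hparent : ∀ y, ∃ z, y ∈ H.verts → y ≠ r →
      H.twoSection.Adj y z ∧ H.dist z r < H.dist y r := fun y => by
    by_cases hy : y ∈ H.verts ∧ y ≠ r
    · obtain ⟨z, hz⟩ := (hc y hy.1 r hr).exists_adj_dist_lt hy.2
      exact ⟨z, fun _ _ => hz⟩
    · exact ⟨y, fun h1 h2 => absurd ⟨h1, h2⟩ hy⟩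
  choose parent hparent using hparent
  -- a pair `s(y, parent y)` determines `y` as its endpoint farther from `r`
  have hinj : Set.InjOn (fun y => s(y, parent y)) (H.verts.erase r) := by
    intro y hy y' hy' h
    obtain ⟨hyr, hy⟩ := mem_erase.1 hy
    obtain ⟨hyr', hy'⟩ := mem_erase.1 hy'
    rcases Sym2.eq_iff.1 h with ⟨rfl, -⟩ | ⟨h1, h2⟩
    · rfl
    · have := (hparent y hy hyr).2
      have := (hparent y' hy' hyr').2
      rw [← h1, h2] at *
      omega
  refine ⟨(H.verts.erase r).image fun y => s(y, parent y), ?_, ?_, ?_⟩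
  · intro p hp
    obtain ⟨y, hy, rfl⟩ := mem_image.1 hp
    obtain ⟨hyr, hy⟩ := mem_erase.1 hy
    have hadj := (hparent y hy hyr).1
    simp [hy, (mem_verts_of_adj hadj).2, hadj.ne]
  · rw [card_image_of_injOn hinj, card_erase_of_mem hr]
  · intro p hp
    obtain ⟨y, hy, rfl⟩ := mem_image.1 hp
    obtain ⟨hyr, hy⟩ := mem_erase.1 hy
    exact (hparent y hy hyr).1

theorem wiener_le_sq_of_dist_le_two (hc : H.Connected)
    (hd : ∀ x ∈ H.verts, ∀ y ∈ H.verts, H.dist x y ≤ 2) :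
    H.wiener ≤ (H.verts.card - 1) ^ 2 := by
  obtain hV | ⟨r, hr⟩ := H.verts.eq_empty_or_nonempty
  · simp [wiener, hV]
  obtain ⟨T, hTP, hTcard, hTadj⟩ := exists_card_verts_sub_one_adjacent_pairs hc hr
  set P := H.verts.sym2.filter (fun p => ¬ p.IsDiag)
  set d : Sym2 α → ℕ := Sym2.lift ⟨fun u v => H.dist u v, fun _ _ => dist_comm⟩
  have hT : ∑ p ∈ T, d p = T.card := by
    rw [card_eq_sum_ones]
    refine sum_congr rfl fun p hp => ?_
    have := hTadj p hp
    induction p using Sym2.ind with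
    | _ x y => exact dist_eq_one_iff_adj.2 this
  have hPT : ∑ p ∈ P \ T, d p ≤ 2 * (P \ T).card := by
    rw [mul_comm, ← smul_eq_mul, ← sum_const]
    exact sum_le_sum fun p hp => (forall_mem_sym2_filter_not_isDiag (P := fun p => d p ≤ 2)).2
      (fun x hx y hy _ => hd x hx y hy) p (sdiff_subset hp)
  have hW : H.wiener ≤ 2 * (P.card - T.card) + T.card := by
    change ∑ p ∈ P, d p ≤ _
    rw [← sum_sdiff hTP, hT, ← card_sdiff_of_subset hTP]
    omega
  obtain ⟨k, hk⟩ : ∃ k, H.verts.card = k + 1 :=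
    Nat.exists_eq_add_one.2 (card_pos.2 ⟨r, hr⟩)
  have hP : 2 * P.card = (k + 1) * k := by
    rw [card_sym2_filter_not_isDiag, hk, mul_comm 2, ← Nat.add_one_mul_choose_eq,
      Nat.choose_one_right]
  have hTP' : T.card ≤ P.card := card_le_card hTP
  rw [hTcard, hk, Nat.add_sub_cancel] at hW hTP'
  rw [hk, Nat.add_sub_cancel]
  zify [hTP'] at hW hP ⊢
  nlinarith

theorem IsSoltes.exists_three_le_dist_delete (h : H.IsSoltes) (hn : H.verts.card ≤ 5)
    (hv : v ∈ H.verts) :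
    ∃ x ∈ (H.delete v).verts, ∃ y ∈ (H.delete v).verts, 3 ≤ (H.delete v).dist x y := by
  obtain ⟨hn2, hc, hdel⟩ := h
  obtain ⟨hKc, hKW⟩ := hdel v hv
  by_contra! hd
  have hle := wiener_le_sq_of_dist_le_two hKc fun x hx y hy => Nat.le_of_lt_succ (hd x hx y hy)
  have hge := choose_two_le_wiener hc
  rw [hKW, card_verts_delete hv] at hle
  interval_cases H.verts.card <;> simp only [Nat.choose] at hle hge <;> omega

theorem IsSoltes.five_le_card (h : H.IsSoltes) : 5 ≤ H.verts.card := by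
  by_contra! hn
  have hn2 := h.1
  obtain ⟨v, hv⟩ : H.verts.Nonempty := card_pos.1 (by omega)
  obtain ⟨x, hx, y, hy, h3⟩ := h.exists_three_le_dist_delete hn.le hv
  have := dist_le_card_sub_one hx ((h.2.2 v hv).1 x hx y hy)
  rw [card_verts_delete hv] at this
  omega

structure IsP4 (H : SHypergraph α) (u a b w : α) : Prop where
  verts_eq : H.verts = {u, a, b, w}
  ne_ub : u ≠ b
  ne_aw : a ≠ w
  ne_uw : u ≠ w
  adj_ua : H.twoSection.Adj u a
  adj_ab : H.twoSection.Adj a b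
  adj_bw : H.twoSection.Adj b w
  not_adj_ub : ¬ H.twoSection.Adj u b
  not_adj_aw : ¬ H.twoSection.Adj a w
  not_adj_uw : ¬ H.twoSection.Adj u w

theorem exists_isP4_of_three_le_dist (hc : H.Connected) (hcard : H.verts.card ≤ 4)
    (hx : x ∈ H.verts) (hy : y ∈ H.verts) (h3 : 3 ≤ H.dist x y) :
    ∃ a b, H.IsP4 x a b y := by
  have hd : H.dist x y = 3 := le_antisymm
    ((dist_le_card_sub_one hx (hc x hx y hy)).trans (by omega)) h3
  have hle : ∀ p : H.twoSection.Walk x y, 3 ≤ p.length := fun p => hd ▸ dist_le p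
  obtain ⟨p, hp⟩ : ∃ p : H.twoSection.Walk x y, p.length = 3 :=
    hd ▸ (hc x hx y hy).exists_walk_length_eq_dist
  have hxa : H.twoSection.Adj x (p.getVert 1) := by
    simpa using p.adj_getVert_succ (i := 0) (by omega)
  have hab : H.twoSection.Adj (p.getVert 1) (p.getVert 2) := p.adj_getVert_succ (by omega)
  have hby : H.twoSection.Adj (p.getVert 2) y := by
    simpa [p.getVert_of_length_le hp.le] using p.adj_getVert_succ (i := 2) (by omega)
  have hxy : ¬ H.twoSection.Adj x y := fun h => by simpa using hle h.toWalk
  have hxb : ¬ H.twoSection.Adj x (p.getVert 2) := fun h => by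
    simpa using hle (.cons h (.cons hby .nil))
  have hay : ¬ H.twoSection.Adj (p.getVert 1) y := fun h => by
    simpa using hle (.cons hxa (.cons h .nil))
  have hxy' : x ≠ y := fun h => by simp [h, SHypergraph.dist] at hd
  have hxb' : x ≠ p.getVert 2 := fun h => hxy (h ▸ hby)
  have hay' : p.getVert 1 ≠ y := fun h => hxy (h ▸ hxa)
  refine ⟨_, _, ⟨(eq_of_subset_of_card_le ?_ ?_).symm, hxb', hay', hxy', hxa, hab, hby,
    hxb, hay, hxy⟩⟩
  · simp [insert_subset_iff, hx, hy, (mem_verts_of_adj hab).1, (mem_verts_of_adj hab).2]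
  · rw [card_insert_of_notMem (by simp [hxa.ne, hxb', hxy']),
      card_insert_of_notMem (by simp [hab.ne, hay']), card_pair hby.ne]
    exact hcard

theorem IsP4.reverse (h : H.IsP4 u a b w) : H.IsP4 w b a u where
  verts_eq := by rw [h.verts_eq]; ext; simp; tauto
  ne_ub := h.ne_aw.symm
  ne_aw := h.ne_ub.symm
  ne_uw := h.ne_uw.symm
  adj_ua := h.adj_bw.symm
  adj_ab := h.adj_ab.symm
  adj_bw := h.adj_ua.symm
  not_adj_ub := fun h' => h.not_adj_aw h'.symm
  not_adj_aw := fun h' => h.not_adj_ub h'.symm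
  not_adj_uw := fun h' => h.not_adj_uw h'.symm

theorem IsP4.wiener_le (h : H.IsP4 u a b w) : H.wiener ≤ 10 := by
  have hu : u ∉ ({a, b, w} : Finset α) := by simp [h.adj_ua.ne, h.ne_ub, h.ne_uw]
  have ha : a ∉ ({b, w} : Finset α) := by simp [h.adj_ab.ne, h.ne_aw]
  have hb : b ∉ ({w} : Finset α) := by simp [h.adj_bw.ne]
  rw [wiener, h.verts_eq, sum_sym2_filter_not_isDiag_insert _ hu,
    sum_sym2_filter_not_isDiag_insert _ ha, sum_sym2_filter_not_isDiag_insert _ hb]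
  simp only [sum_insert ha, sum_insert hb, sum_singleton, Sym2.lift_mk, sym2_singleton,
    filter_singleton, Sym2.diag_isDiag, not_true_eq_false, if_false, sum_empty]
  have hua : H.dist u a ≤ 1 := dist_le h.adj_ua.toWalk
  have hab : H.dist a b ≤ 1 := dist_le h.adj_ab.toWalk
  have hbw : H.dist b w ≤ 1 := dist_le h.adj_bw.toWalk
  have hub : H.dist u b ≤ 2 := dist_le (.cons h.adj_ua h.adj_ab.toWalk)
  have haw : H.dist a w ≤ 2 := dist_le (.cons h.adj_ab h.adj_bw.toWalk)
  have huw : H.dist u w ≤ 3 := dist_le (.cons h.adj_ua (.cons h.adj_ab h.adj_bw.toWalk))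
  omega

theorem IsP4.cliqueFree (h : H.IsP4 u a b w) : H.twoSection.CliqueFree 3 := by
  intro s hs
  obtain ⟨x, y, z, -, -, -, rfl⟩ := card_eq_three.1 hs.card_eq
  obtain ⟨hxy, hxz, hyz⟩ := is3Clique_triple_iff.1 hs
  have hx := (mem_verts_of_adj hxy).1
  have hy := (mem_verts_of_adj hxy).2
  have hz := (mem_verts_of_adj hxz).2
  have := h.not_adj_ub
  have := h.not_adj_aw
  have := h.not_adj_uw
  simp only [h.verts_eq, mem_insert, mem_singleton] at hx hy hz
  rcases hx with rfl | rfl | rfl | rfl <;> rcases hy with rfl | rfl | rfl | rfl <;>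
    rcases hz with rfl | rfl | rfl | rfl <;> simp_all [adj_comm]

theorem card_eq_two_or_eq_verts_of_cliqueFree
    (hcf : ∀ v ∈ H.verts, (H.delete v).twoSection.CliqueFree 3) {e : Finset α}
    (he : e ∈ H.edges) : e.card = 2 ∨ e = H.verts := by
  by_contra! hne
  obtain ⟨v, hv, hve⟩ := exists_of_ssubset ((H.edge_sub e he).ssubset_of_ne hne.2)
  obtain ⟨x, y, z, hx, hy, hz, hxy, hxz, hyz⟩ :=
    two_lt_card_iff.1 (lt_of_le_of_ne (H.edge_card e he) hne.1.symm)
  have he' : e ∈ (H.delete v).edges := mem_filter.2 ⟨he, hve⟩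
  exact hcf v hv {x, y, z} (is3Clique_triple_iff.2
    ⟨⟨hxy, e, he', hx, hy⟩, ⟨hxz, e, he', hx, hz⟩, ⟨hyz, e, he', hy, hz⟩⟩)

theorem eq_pair_of_card_eq_two {e : Finset α} (he : e.card = 2) (hx : x ∈ e) (hy : y ∈ e)
    (hxy : x ≠ y) : e = {x, y} :=
  (eq_of_subset_of_card_le (insert_subset hx (singleton_subset_iff.2 hy))
    (by rw [he, card_pair hxy])).symm

theorem adj_delete_iff (hE : ∀ e ∈ H.edges, e.card = 2 ∨ e = H.verts) (hv : v ∈ H.verts) :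
    (H.delete v).twoSection.Adj x y ↔ {x, y} ∈ H.edges ∧ x ≠ v ∧ y ≠ v := by
  constructor
  · rintro ⟨hxy, e, he, hx, hy⟩
    obtain ⟨he, hve⟩ := mem_filter.1 he
    have hcard : e.card = 2 := (hE e he).resolve_right fun h => hve (h ▸ hv)
    rw [eq_pair_of_card_eq_two hcard hx hy hxy] at he hve
    exact ⟨he, fun h => hve (by simp [h]), fun h => hve (by simp [h])⟩
  · rintro ⟨he, hxv, hyv⟩
    have hxy : x ≠ y := fun h => by simpa [h] using H.edge_card _ he
    exact ⟨hxy, _, mem_filter.2 ⟨he, by simp [hxv.symm, hyv.symm]⟩, by simp, by simp⟩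

theorem IsP4.mem_verts_ne_of_delete (hP : (H.delete x0).IsP4 u a b w) {y : α}
    (hy : y ∈ ({u, a, b, w} : Finset α)) : y ∈ H.verts ∧ y ≠ x0 := by
  have : y ∈ (H.delete x0).verts := hP.verts_eq ▸ hy
  exact ⟨(mem_erase.1 this).2, (mem_erase.1 this).1⟩

theorem pair_mem_edges_of_isP4_delete (hE : ∀ e ∈ H.edges, e.card = 2 ∨ e = H.verts)
    (hx0 : x0 ∈ H.verts) (hP : (H.delete x0).IsP4 u a b w) (hconn : (H.delete a).Connected) :
    {x0, u} ∈ H.edges := by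
  obtain ⟨hu, hux⟩ := hP.mem_verts_ne_of_delete (y := u) (by simp)
  obtain ⟨ha, hax⟩ := hP.mem_verts_ne_of_delete (y := a) (by simp)
  obtain ⟨-, hbx⟩ := hP.mem_verts_ne_of_delete (y := b) (by simp)
  obtain ⟨-, hwx⟩ := hP.mem_verts_ne_of_delete (y := w) (by simp)
  obtain ⟨z, hz, -⟩ := (hconn u (mem_erase.2 ⟨hP.adj_ua.ne, hu⟩) x0
    (mem_erase.2 ⟨hax.symm, hx0⟩)).exists_adj_dist_lt hux
  obtain ⟨huz, -, hza⟩ := (adj_delete_iff hE ha).1 hz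
  by_cases hzx : z = x0
  · rwa [hzx, pair_comm] at huz
  have hzK : z ∈ (H.delete x0).verts :=
    mem_erase.2 ⟨hzx, (mem_erase.1 (mem_verts_of_adj hz).2).2⟩
  have hadj : (H.delete x0).twoSection.Adj u z := (adj_delete_iff hE hx0).2 ⟨huz, hux, hzx⟩
  simp only [hP.verts_eq, mem_insert, mem_singleton] at hzK
  rcases hzK with rfl | rfl | rfl | rfl
  · exact absurd rfl hadj.ne
  · exact absurd rfl hza
  · exact absurd hadj hP.not_adj_ub
  · exact absurd hadj hP.not_adj_uw

theorem pair_not_mem_edges_of_isP4_delete (hE : ∀ e ∈ H.edges, e.card = 2 ∨ e = H.verts)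
    (hx0 : x0 ∈ H.verts) (hP : (H.delete x0).IsP4 u a b w)
    (hcf : (H.delete a).twoSection.CliqueFree 3) (hw : {x0, w} ∈ H.edges) :
    {x0, b} ∉ H.edges := by
  intro hb
  obtain ⟨ha, hax⟩ := hP.mem_verts_ne_of_delete (y := a) (by simp)
  have hbw := ((adj_delete_iff hE hx0).1 hP.adj_bw).1
  have hab := hP.adj_ab.ne
  have haw := hP.ne_aw
  have adj := fun {y z : α} (h : {y, z} ∈ H.edges) (hy : y ≠ a) (hz : z ≠ a) =>
    (adj_delete_iff hE ha).2 ⟨h, hy, hz⟩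
  exact hcf {x0, b, w} (is3Clique_triple_iff.2 ⟨adj hb hax.symm hab.symm,
    adj hw hax.symm haw.symm, adj hbw hab.symm haw.symm⟩)

theorem IsP4.verts_eq_insert_of_delete (hx0 : x0 ∈ H.verts) (hP : (H.delete x0).IsP4 u a b w) :
    H.verts = {x0, u, a, b, w} := by
  rw [← insert_erase hx0]
  exact congrArg (insert x0) hP.verts_eq

theorem verts_mem_edges (hE : ∀ e ∈ H.edges, e.card = 2 ∨ e = H.verts)
    (hcomplete : ∀ x ∈ H.verts, ∀ y ∈ H.verts, x ≠ y → H.twoSection.Adj x y)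
    (hx : x ∈ H.verts) (hy : y ∈ H.verts) (hxy : x ≠ y) (hnot : {x, y} ∉ H.edges) :
    H.verts ∈ H.edges := by
  obtain ⟨-, e, he, hxe, hye⟩ := hcomplete x hx y hy hxy
  have heV : e = H.verts := (hE e he).resolve_left fun hcard => hnot <| by
    rwa [← eq_pair_of_card_eq_two hcard hxe hye hxy]
  exact heV ▸ he

theorem edges_subset_of_not_mem (hE : ∀ e ∈ H.edges, e.card = 2 ∨ e = H.verts)
    (hV : H.verts = {x0, u, a, b, w}) (hxa : {x0, a} ∉ H.edges) (hxb : {x0, b} ∉ H.edges)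
    (hub : {u, b} ∉ H.edges) (haw : {a, w} ∉ H.edges) (huw : {u, w} ∉ H.edges) :
    H.edges ⊆ {{x0, u}, {u, a}, {a, b}, {b, w}, {w, x0}, H.verts} := by
  intro e he
  rcases hE e he with hcard | rfl
  · obtain ⟨p, q, hpq, rfl⟩ := card_eq_two.1 hcard
    have hp := H.edge_sub _ he (mem_insert_self p {q})
    have hq := H.edge_sub _ he (mem_insert_of_mem (mem_singleton_self q))
    have he' : {q, p} ∈ H.edges := pair_comm p q ▸ he
    rw [hV] at hp hq
    simp only [mem_insert, mem_singleton] at hp hq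
    rcases hp with rfl | rfl | rfl | rfl | rfl <;> rcases hq with rfl | rfl | rfl | rfl | rfl
    all_goals first
      | exact absurd rfl hpq
      | exact absurd he hxa | exact absurd he' hxa | exact absurd he hxb | exact absurd he' hxb
      | exact absurd he hub | exact absurd he' hub | exact absurd he haw | exact absurd he' haw
      | exact absurd he huw | exact absurd he' huw
      | (simp; done)
      | simp [pair_comm]
  · simp

theorem edges_eq_of_isP4_delete (hE : ∀ e ∈ H.edges, e.card = 2 ∨ e = H.verts)
    (hcomplete : ∀ x ∈ H.verts, ∀ y ∈ H.verts, x ≠ y → H.twoSection.Adj x y)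
    (hconn : ∀ v ∈ H.verts, (H.delete v).Connected)
    (hcf : ∀ v ∈ H.verts, (H.delete v).twoSection.CliqueFree 3)
    (hx0 : x0 ∈ H.verts) (hP : (H.delete x0).IsP4 u a b w) :
    H.edges = {{x0, u}, {u, a}, {a, b}, {b, w}, {w, x0}, H.verts} := by
  obtain ⟨hu, hux⟩ := hP.mem_verts_ne_of_delete (y := u) (by simp)
  obtain ⟨ha, hax⟩ := hP.mem_verts_ne_of_delete (y := a) (by simp)
  obtain ⟨hb, hbx⟩ := hP.mem_verts_ne_of_delete (y := b) (by simp)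
  obtain ⟨-, hwx⟩ := hP.mem_verts_ne_of_delete (y := w) (by simp)
  have hxu := pair_mem_edges_of_isP4_delete hE hx0 hP (hconn a ha)
  have hxw := pair_mem_edges_of_isP4_delete hE hx0 hP.reverse (hconn b hb)
  have hxb := pair_not_mem_edges_of_isP4_delete hE hx0 hP (hcf a ha) hxw
  have hxa := pair_not_mem_edges_of_isP4_delete hE hx0 hP.reverse (hcf b hb) hxu
  have hpath := fun {y z : α} (h : (H.delete x0).twoSection.Adj y z) =>
    ((adj_delete_iff hE hx0).1 h).1
  have hnpath := fun {y z : α} (h : ¬ (H.delete x0).twoSection.Adj y z) (hy : y ≠ x0)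
    (hz : z ≠ x0) (he : {y, z} ∈ H.edges) => h ((adj_delete_iff hE hx0).2 ⟨he, hy, hz⟩)
  refine subset_antisymm (edges_subset_of_not_mem hE (hP.verts_eq_insert_of_delete hx0) hxa hxb
    (hnpath hP.not_adj_ub hux hbx) (hnpath hP.not_adj_aw hax hwx)
    (hnpath hP.not_adj_uw hux hwx)) ?_
  simp only [insert_subset_iff, singleton_subset_iff]
  exact ⟨hxu, hpath hP.adj_ua, hpath hP.adj_ab, hpath hP.adj_bw, pair_comm w x0 ▸ hxw,
    verts_mem_edges hE hcomplete hx0 ha hax.symm hxa⟩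

theorem IsSoltes.exists_isP4_delete (h : H.IsSoltes) (hn : H.verts.card = 5)
    (hv : v ∈ H.verts) : ∃ u a b w, (H.delete v).IsP4 u a b w := by
  obtain ⟨x, hx, y, hy, h3⟩ := h.exists_three_le_dist_delete hn.le hv
  obtain ⟨a, b, hP⟩ := exists_isP4_of_three_le_dist (h.2.2 v hv).1
    (by rw [card_verts_delete hv, hn]) hx hy h3
  exact ⟨x, a, b, y, hP⟩

theorem isIsoTo_of_injective {H' : SHypergraph β} [DecidableEq β] [Nonempty β] (φ : β → α)
    (hφ : Function.Injective φ) (hV : H.verts = H'.verts.image φ)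
    (hE : H.edges = H'.edges.image (image φ)) : H.IsIsoTo H' := by
  have hinv : ∀ s : Finset β, (s.image φ).image (Function.invFun φ) = s := fun s => by
    rw [image_image, (Function.leftInverse_invFun hφ).comp_eq_id, image_id]
  refine ⟨Function.invFun φ, ?_, by rw [hV, hinv], ?_⟩
  · rw [hV, coe_image]
    rintro _ ⟨i, -, rfl⟩ _ ⟨j, -, rfl⟩ h
    rw [Function.leftInverse_invFun hφ i, Function.leftInverse_invFun hφ j] at h
    rw [h]
  · rw [hE, image_image]
    exact (image_congr fun e _ => hinv e).trans image_id |>.symm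

theorem isIsoTo_cycleFivePlus (hV : H.verts = {x0, u, a, b, w})
    (hcard : H.verts.card = 5)
    (hE : H.edges = {{x0, u}, {u, a}, {a, b}, {b, w}, {w, x0}, H.verts}) :
    H.IsIsoTo cycleFivePlus := by
  have himg : (univ : Finset (Fin 5)).image ![x0, u, a, b, w] = H.verts := by
    ext z
    simp [hV, Fin.exists_fin_succ, eq_comm]
  have hinj : Function.Injective ![x0, u, a, b, w] := by
    rw [← Set.injOn_univ, ← coe_univ, ← card_image_iff, himg, hcard, card_univ,
      Fintype.card_fin]
  have hcyc : cycleFivePlus.edges = {{0, 1}, {1, 2}, {2, 3}, {3, 4}, {4, 0}, univ} := by decide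
  refine isIsoTo_of_injective _ hinj himg.symm ?_
  rw [hcyc, hE]
  simp [image_insert, himg]

end SHypergraph

open SHypergraph

theorem stmt4 {α : Type*} [DecidableEq α] (H : SHypergraph α) (h : H.IsSoltes) :
    5 ≤ H.verts.card ∧ (H.verts.card = 5 → H.IsIsoTo cycleFivePlus) := by
  refine ⟨h.five_le_card, fun hn => ?_⟩
  obtain ⟨x0, hx0⟩ : H.verts.Nonempty := card_pos.1 (by omega)
  obtain ⟨u, a, b, w, hP⟩ := h.exists_isP4_delete hn hx0
  have hW : H.wiener ≤ H.verts.card.choose 2 := by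
    rw [← (h.2.2 x0 hx0).2, hn]
    exact hP.wiener_le
  have hcf : ∀ v ∈ H.verts, (H.delete v).twoSection.CliqueFree 3 := fun v hv => by
    obtain ⟨_, _, _, _, hPv⟩ := h.exists_isP4_delete hn hv
    exact hPv.cliqueFree
  exact isIsoTo_cycleFivePlus (hP.verts_eq_insert_of_delete hx0) hn
    (edges_eq_of_isP4_delete (fun e he => card_eq_two_or_eq_verts_of_cliqueFree hcf he)
      (fun x hx y hy hxy => adj_of_wiener_le_choose_two h.2.1 hW hx hy hxy)
      (fun v hv => (h.2.2 v hv).1) hcf hx0 hP)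
end

section
/- There is no 3-uniform Šoltés hypergraph of diameter 1; that is, no 3-uniform Šoltés hypergraph has the property that every two distinct vertices lie in a common edge. -/
variable {α : Type*} {β : Type*}

/-- A hypergraph: a finite vertex set together with a set of edges,
each an at-least-2-element subset of the vertex set. -/
structure FinHypergraph (α : Type*) where
  verts : Finset α
  edges : Finset (Finset α)
  edge_sub : ∀ e ∈ edges, e ⊆ verts
  edge_card : ∀ e ∈ edges, 2 ≤ e.card

namespace FinHypergraph

/-- The 2-section graph of a hypergraph: two distinct vertices are adjacent
iff some edge contains both. -/
def twoSection (H : FinHypergraph α) : SimpleGraph α where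
  Adj u v := u ≠ v ∧ ∃ e ∈ H.edges, u ∈ e ∧ v ∈ e
  symm := by
    constructor
    rintro u v ⟨huv, e, he, hu, hv⟩
    exact ⟨huv.symm, e, he, hv, hu⟩
  loopless := by
    constructor
    rintro u ⟨h, -⟩
    exact h rfl

/-- Distance between two vertices: graph distance in the 2-section. -/
noncomputable def dist (H : FinHypergraph α) (u v : α) : ℕ :=
  H.twoSection.dist u v

/-- A hypergraph is connected if every two of its vertices are joined by a path. -/
def Connected (H : FinHypergraph α) : Prop :=
  ∀ u ∈ H.verts, ∀ v ∈ H.verts, H.twoSection.Reachable u v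

/-- The Wiener index (total distance): the sum of distances over all
unordered pairs of distinct vertices. -/
noncomputable def wiener [DecidableEq α] (H : FinHypergraph α) : ℕ :=
  ∑ p ∈ H.verts.sym2.filter (fun p => ¬ p.IsDiag),
    Sym2.lift ⟨fun u v => H.dist u v, fun _ _ => SimpleGraph.dist_comm⟩ p

/-- Vertex deletion: remove the vertex and all edges containing it. -/
def delete [DecidableEq α] (H : FinHypergraph α) (v : α) : FinHypergraph α where
  verts := H.verts.erase v
  edges := H.edges.filter fun e => v ∉ e
  edge_sub := by
    intro e he x hx
    rw [Finset.mem_filter] at he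
    exact Finset.mem_erase.mpr ⟨fun h => he.2 (h ▸ hx), H.edge_sub e he.1 hx⟩
  edge_card := fun e he => H.edge_card e (Finset.mem_filter.mp he).1

/-- A Šoltés hypergraph: a connected hypergraph on at least 2 vertices such that
deleting any vertex leaves a connected hypergraph with the same Wiener index. -/
def IsSoltes [DecidableEq α] (H : FinHypergraph α) : Prop :=
  2 ≤ H.verts.card ∧ H.Connected ∧
    ∀ v ∈ H.verts, (H.delete v).Connected ∧ (H.delete v).wiener = H.wiener

/-- The diameter: the maximum distance over unordered pairs of distinct vertices. -/
noncomputable def diam [DecidableEq α] (H : FinHypergraph α) : ℕ :=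
  H.verts.offDiag.sup fun p => H.dist p.1 p.2

/-- The degree of a vertex: the number of edges containing it. -/
def degree [DecidableEq α] (H : FinHypergraph α) (v : α) : ℕ :=
  (H.edges.filter fun e => v ∈ e).card

/-- FinHypergraph isomorphism: a bijection between the vertex sets mapping
edges onto edges. -/
def IsIsoTo [DecidableEq β] (H : FinHypergraph α) (H' : FinHypergraph β) : Prop :=
  ∃ f : α → β, Set.InjOn f ↑H.verts ∧ H'.verts = H.verts.image f ∧
    H'.edges = H.edges.image fun e => e.image f

end FinHypergraph

/-! In a complete 3-uniform hypergraph on `n` vertices every distance is `1`, so `W(H) = C(n,2)`.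
If `W(H - v) = W(H) = C(n-1,2) + (n-1)`, the distances between non-adjacent pairs of `H - v`
exceed `1` by `n - 1` in total: either all of them are `2`, giving `n - 1` such pairs, or some
`u, w` are at distance at least `3`, and then every other vertex is non-adjacent to `u` or to `w`,
giving at least `n - 2` such pairs. A pair `{u, w}` that is non-adjacent in `H - v` has `{u, w, v}`
as its only edge, so these sets of pairs are disjoint for distinct `v`, whence
`n (n - 2) ≤ C(n,2)` and `n ≤ 3`. Finally `n = 3` is impossible: `H` is then a single edge, and
deleting a vertex disconnects it. -/

open Finset

namespace Finset

variable [DecidableEq α]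

lemma card_sym2_filter_isDiag (s : Finset α) : #{p ∈ s.sym2 | p.IsDiag} = #s := by
  have : {p ∈ s.sym2 | p.IsDiag} = s.image Sym2.diag := by
    ext p
    induction p with
    | _ x y =>
      simp only [mem_filter, mk_mem_sym2_iff, Sym2.mk_isDiag_iff, mem_image, Sym2.diag, Sym2.eq_iff]
      grind
  rw [this, card_image_of_injective _ Sym2.diag_injective]

lemma card_sym2_filter_not_isDiag_s9 (s : Finset α) :
    #{p ∈ s.sym2 | ¬p.IsDiag} = (#s).choose 2 := by
  have h := card_filter_add_card_filter_not (s := s.sym2) (p := fun p => p.IsDiag)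
  rw [card_sym2_filter_isDiag, card_sym2, Nat.choose_succ_succ', Nat.choose_one_right] at h
  exact Nat.add_left_cancel h

end Finset

namespace SimpleGraph

variable (G : SimpleGraph α)

noncomputable def pairDist : Sym2 α → ℕ := Sym2.lift ⟨G.dist, fun _ _ => dist_comm⟩

@[simp] lemma pairDist_mk (u v : α) : G.pairDist s(u, v) = G.dist u v := rfl

lemma not_adj_and_adj_of_two_lt_dist {u w : α} (h : 2 < G.dist u w) (x : α) :
    ¬(G.Adj u x ∧ G.Adj x w) := by
  rintro ⟨hux, hxw⟩
  have := G.dist_le (hux.toWalk.append hxw.toWalk)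
  simp only [Walk.length_append, Walk.length_cons, Walk.length_nil] at this
  omega

variable [DecidableEq α]

noncomputable def distSum (s : Finset α) : ℕ := ∑ p ∈ s.sym2 with ¬p.IsDiag, G.pairDist p

open Classical in
noncomputable def nonAdjPairs (s : Finset α) : Finset (Sym2 α) :=
  {p ∈ s.sym2 | ¬p.IsDiag ∧ p ∉ G.edgeSet}

variable {G}

lemma mk_mem_nonAdjPairs {s : Finset α} {u w : α} :
    s(u, w) ∈ G.nonAdjPairs s ↔ u ∈ s ∧ w ∈ s ∧ u ≠ w ∧ ¬G.Adj u w := by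
  simp [nonAdjPairs, and_assoc]

lemma nonAdjPairs_subset (s : Finset α) : G.nonAdjPairs s ⊆ {p ∈ s.sym2 | ¬p.IsDiag} :=
  fun _ hp => by
    simp only [nonAdjPairs, mem_filter] at hp ⊢
    exact ⟨hp.1, hp.2.1⟩

lemma IsClique.distSum_eq {s : Finset α} (hs : G.IsClique (s : Set α)) :
    G.distSum s = (#s).choose 2 := by
  rw [distSum, ← card_sym2_filter_not_isDiag_s9, card_eq_sum_ones]
  refine sum_congr rfl fun p hp => ?_
  induction p with
  | _ u w =>
    simp only [mem_filter, mk_mem_sym2_iff, Sym2.mk_isDiag_iff] at hp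
    exact dist_eq_one_iff_adj.mpr (hs hp.1.1 hp.1.2 hp.2)

lemma distSum_le (s : Finset α) :
    G.distSum s ≤ (#s).choose 2 + ∑ p ∈ G.nonAdjPairs s, (G.pairDist p - 1) := by
  rw [distSum, ← card_sym2_filter_not_isDiag_s9, card_eq_sum_ones, nonAdjPairs, sum_filter,
    sum_filter, sum_filter, ← sum_add_distrib]
  refine sum_le_sum fun p _ => ?_
  induction p with
  | _ u w =>
    by_cases huw : s(u, w).IsDiag
    · simp [huw]
    by_cases hadj : G.Adj u w
    · simp [huw, hadj, dist_eq_one_iff_adj.mpr hadj]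
    · simp only [huw, not_false_eq_true, if_true, pairDist_mk, mem_edgeSet, hadj, and_self]
      omega

lemma card_sub_one_le_card_nonAdjPairs_of_two_lt_dist {s : Finset α} {u w : α} (hu : u ∈ s)
    (hw : w ∈ s) (huw : 2 < G.dist u w) : #s - 1 ≤ #(G.nonAdjPairs s) := by
  classical
  have hne : u ≠ w := by rintro rfl; simp at huw
  have hnadj : ¬G.Adj u w := fun h => by simp [dist_eq_one_iff_adj.mpr h] at huw
  set T := (s.erase u).erase w
  -- `u` and `w` have no common neighbour, so each `x ∈ T` is non-adjacent to one of them
  let f : α → Sym2 α := fun x => if G.Adj u x then s(w, x) else s(u, x)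
  have hfT : ∀ x ∈ T, f x ∈ G.nonAdjPairs s ∧ f x ≠ s(u, w) := by
    intro x hx
    simp only [T, mem_erase] at hx
    obtain ⟨hxw, hxu, hxs⟩ := hx
    have := G.not_adj_and_adj_of_two_lt_dist huw x
    by_cases hux : G.Adj u x <;> simp only [f, hux, if_true, if_false, mk_mem_nonAdjPairs] <;>
      grind [Sym2.eq_iff, SimpleGraph.adj_comm]
  have hinj : Set.InjOn f T := by
    intro x hx y hy hxy
    simp only [T, coe_erase, Set.mem_sdiff, Set.mem_singleton_iff] at hx hy
    by_cases hux : G.Adj u x <;> by_cases huy : G.Adj u y <;>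
      simp only [f, hux, huy, if_true, if_false, Sym2.eq_iff] at hxy <;> grind
  have hsub : insert s(u, w) (T.image f) ⊆ G.nonAdjPairs s := by
    refine insert_subset (mk_mem_nonAdjPairs.mpr ⟨hu, hw, hne, hnadj⟩) ?_
    exact image_subset_iff.mpr fun x hx => (hfT x hx).1
  have hnot : s(u, w) ∉ T.image f := by
    simp only [mem_image, not_exists, not_and]
    exact fun x hx hfx => (hfT x hx).2 hfx
  have hT : #T + 1 = #s - 1 := by
    rw [card_erase_of_mem (mem_erase.mpr ⟨hne.symm, hw⟩), card_erase_of_mem hu]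
    have := one_lt_card.mpr ⟨u, hu, w, hw, hne⟩
    omega
  calc #s - 1 = #(insert s(u, w) (T.image f)) := by
        rw [card_insert_of_notMem hnot, card_image_of_injOn hinj, hT]
    _ ≤ #(G.nonAdjPairs s) := card_le_card hsub

lemma card_sub_one_le_card_nonAdjPairs {s : Finset α} (h : (#s + 1).choose 2 ≤ G.distSum s) :
    #s - 1 ≤ #(G.nonAdjPairs s) := by
  have hexcess : #s ≤ ∑ p ∈ G.nonAdjPairs s, (G.pairDist p - 1) := by
    have hsucc : (#s + 1).choose 2 = #s + (#s).choose 2 := by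
      rw [Nat.choose_succ_succ', Nat.choose_one_right]
    have := G.distSum_le s
    omega
  by_cases hfar : ∃ u ∈ s, ∃ w ∈ s, 2 < G.dist u w
  · obtain ⟨u, hu, w, hw, huw⟩ := hfar
    exact card_sub_one_le_card_nonAdjPairs_of_two_lt_dist hu hw huw
  · simp only [not_exists, not_and, not_lt] at hfar
    have : ∑ p ∈ G.nonAdjPairs s, (G.pairDist p - 1) ≤ #(G.nonAdjPairs s) := by
      rw [card_eq_sum_ones]
      refine sum_le_sum fun p hp => ?_
      induction p with
      | _ u w =>
        have := hfar u (mk_mem_nonAdjPairs.mp hp).1 w (mk_mem_nonAdjPairs.mp hp).2.1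
        simp only [pairDist_mk]
        omega
    omega

end SimpleGraph

lemma Nat.le_three_of_mul_sub_two_le_choose_two {n : ℕ} (h : n * (n - 2) ≤ n.choose 2) :
    n ≤ 3 := by
  by_contra! hn
  obtain ⟨k, rfl⟩ : ∃ k, n = k + 4 := ⟨n - 4, by omega⟩
  rw [Nat.choose_two_right, Nat.le_div_iff_mul_le two_pos] at h
  rw [show k + 4 - 2 = k + 2 by omega, show k + 4 - 1 = k + 3 by omega] at h
  nlinarith

namespace FinHypergraph

variable [DecidableEq α] {H : FinHypergraph α}

open SimpleGraph

lemma mem_of_not_adj_delete {v u w : α} {e : Finset α} (he : e ∈ H.edges) (hu : u ∈ e)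
    (hw : w ∈ e) (huw : u ≠ w) (hadj : ¬(H.delete v).twoSection.Adj u w) : v ∈ e := by
  by_contra hv
  exact hadj ⟨huw, e, mem_filter.mpr ⟨he, hv⟩, hu, hw⟩

lemma not_connected_delete {v : α} (hv : v ∈ H.verts) (hcard : 3 ≤ #H.verts)
    (hedges : ∀ e ∈ H.edges, v ∈ e) : ¬(H.delete v).Connected := by
  intro hconn
  obtain ⟨x, hx, y, hy, hxy⟩ := one_lt_card.mp (show 1 < #(H.delete v).verts by
    simp only [delete, card_erase_of_mem hv]; omega)
  obtain ⟨p⟩ := hconn x hx y hy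
  cases p with
  | nil => exact hxy rfl
  | cons h _ =>
    obtain ⟨-, e, he, -⟩ := h
    exact (mem_filter.mp he).2 (hedges e (mem_filter.mp he).1)

lemma disjoint_nonAdjPairs_delete (h3 : ∀ e ∈ H.edges, #e = 3)
    (hclique : H.twoSection.IsClique H.verts) {v v' : α} (hvv' : v ≠ v') :
    Disjoint ((H.delete v).twoSection.nonAdjPairs (H.verts.erase v))
      ((H.delete v').twoSection.nonAdjPairs (H.verts.erase v')) := by
  rw [Finset.disjoint_left]
  intro p hp hp'
  induction p with
  | _ u w =>
    rw [mk_mem_nonAdjPairs] at hp hp'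
    obtain ⟨hu, hw, huw, hadj⟩ := hp
    obtain ⟨hu', hw', -, hadj'⟩ := hp'
    obtain ⟨-, e, he, hue, hwe⟩ := hclique (mem_of_mem_erase hu) (mem_of_mem_erase hw) huw
    have hsub : {v, v', u, w} ⊆ e := by
      simp only [insert_subset_iff, singleton_subset_iff, hue, hwe, and_true,
        mem_of_not_adj_delete he hue hwe huw hadj, mem_of_not_adj_delete he hue hwe huw hadj']
    have hcard : #{v, v', u, w} = 4 := by
      rw [card_insert_of_notMem, card_insert_of_notMem, card_pair huw] <;>
        simp_all [eq_comm]
    have := card_le_card hsub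
    rw [hcard, h3 e he] at this
    omega

lemma card_sub_two_le_card_nonAdjPairs_delete (hclique : H.twoSection.IsClique H.verts) {v : α}
    (hv : v ∈ H.verts) (hW : (H.delete v).wiener = H.wiener) :
    #H.verts - 2 ≤ #((H.delete v).twoSection.nonAdjPairs (H.verts.erase v)) := by
  have h := (H.delete v).twoSection.card_sub_one_le_card_nonAdjPairs (s := H.verts.erase v) ?_
  · rw [card_erase_of_mem hv] at h
    omega
  · rw [card_erase_of_mem hv, Nat.sub_add_cancel (card_pos.mpr ⟨v, hv⟩),
      ← hclique.distSum_eq]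
    exact hW.ge

lemma card_mul_card_sub_two_le_choose_two (h3 : ∀ e ∈ H.edges, #e = 3)
    (hclique : H.twoSection.IsClique H.verts)
    (hW : ∀ v ∈ H.verts, (H.delete v).wiener = H.wiener) :
    #H.verts * (#H.verts - 2) ≤ (#H.verts).choose 2 := by
  set N := fun v => (H.delete v).twoSection.nonAdjPairs (H.verts.erase v)
  calc #H.verts * (#H.verts - 2) = ∑ _v ∈ H.verts, (#H.verts - 2) := by
        rw [sum_const, smul_eq_mul]
    _ ≤ ∑ v ∈ H.verts, #(N v) :=
        sum_le_sum fun v hv => card_sub_two_le_card_nonAdjPairs_delete hclique hv (hW v hv)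
    _ = #(H.verts.biUnion N) :=
        (card_biUnion fun v _ v' _ hvv' => disjoint_nonAdjPairs_delete h3 hclique hvv').symm
    _ ≤ #{p ∈ H.verts.sym2 | ¬p.IsDiag} :=
        card_le_card <| biUnion_subset.mpr fun v _ =>
          (nonAdjPairs_subset _).trans (filter_subset_filter _ (sym2_mono (erase_subset v _)))
    _ = (#H.verts).choose 2 := card_sym2_filter_not_isDiag_s9 _

end FinHypergraph

theorem stmt9 {α : Type*} [DecidableEq α] (H : FinHypergraph α)
    (h : H.IsSoltes) (h3 : ∀ e ∈ H.edges, e.card = 3) :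
    ¬ ∀ u ∈ H.verts, ∀ v ∈ H.verts, u ≠ v → ∃ e ∈ H.edges, u ∈ e ∧ v ∈ e := by
  intro hcomplete
  obtain ⟨hcard, -, hdel⟩ := h
  have hclique : H.twoSection.IsClique H.verts :=
    fun u hu w hw huw => ⟨huw, hcomplete u hu w hw huw⟩
  have hn3 : 3 ≤ #H.verts := by
    obtain ⟨u, hu, w, hw, huw⟩ := one_lt_card.mp hcard
    obtain ⟨e, he, -⟩ := hcomplete u hu w hw huw
    exact h3 e he ▸ card_le_card (H.edge_sub e he)
  have hn : #H.verts ≠ 3 := by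
    intro hn
    obtain ⟨v, hv⟩ := card_pos.mp (by omega : 0 < #H.verts)
    refine FinHypergraph.not_connected_delete hv hn3 (fun e he => ?_) (hdel v hv).1
    rw [eq_of_subset_of_card_le (H.edge_sub e he) (by rw [h3 e he, hn])]
    exact hv
  have := Nat.le_three_of_mul_sub_two_le_choose_two
    (FinHypergraph.card_mul_card_sub_two_le_choose_two h3 hclique fun v hv => (hdel v hv).2)
  omega
end

section
/- Let H be a 4-uniform Šoltés hypergraph such that H has diameter 1 and H \ v has diameter 2 for every vertex v of H. Then every pair of distinct vertices of H is contained in exactly one edge of H, i.e., H is a Steiner system S(2,4,n) where n is the order of H. -/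
variable {α : Type*} {β : Type*}

/-!
Since `H` has diameter 1, every pair of vertices lies in an edge, and since `H \ v` has diameter
2, deleting `v` raises the distance of a pair `{u, w}` from 1 to 2 exactly when `v` lies in every
edge through `u` and `w`, i.e. in the core of `{u, w}`. So `W(H \ v) = W(H)` says that `v` lies in
the cores of exactly as many pairs as it belongs to. Double counting shows that the cores have
average size 2; a core fits in an edge minus the pair, so each has exactly 2 vertices. Two distinct
edges through `u` and `w` share at most 3 vertices and would leave room for only one.
-/

open Finset

theorem SimpleGraph.Reachable.dist_eq_two_of_not_adj {V : Type*} {G : SimpleGraph V} {u v : V}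
    (hr : G.Reachable u v) (hne : u ≠ v) (hna : ¬G.Adj u v) (h2 : G.dist u v ≤ 2) :
    G.dist u v = 2 := by
  have hpos := hr.pos_dist_of_ne hne
  have : G.dist u v ≠ 1 := fun h1 => hna (SimpleGraph.dist_eq_one_iff_adj.mp h1)
  omega

theorem Finset.card_inter_lt_of_card_eq [DecidableEq α] {s t : Finset α} (hst : s ≠ t)
    (hcard : #s = #t) : #(s ∩ t) < #s := by
  refine card_lt_card (ssubset_iff_subset_ne.mpr ⟨inter_subset_left, fun hinter => ?_⟩)
  exact hst (eq_of_subset_of_card_le (hinter ▸ inter_subset_right) hcard.ge)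

namespace FinHypergraph

variable [DecidableEq α] {H : FinHypergraph α} {s : Finset α} {p : Sym2 α} {e₁ e₂ : Finset α}
  {u v w x : α}

def distinctPairs (s : Finset α) : Finset (Sym2 α) := {p ∈ s.sym2 | ¬p.IsDiag}

@[simp]
lemma mk_mem_distinctPairs : s(u, w) ∈ distinctPairs s ↔ u ∈ s ∧ w ∈ s ∧ u ≠ w := by
  simp [distinctPairs, and_assoc]

lemma distinctPairs_erase : distinctPairs (s.erase v) = {p ∈ distinctPairs s | v ∉ p} := by
  ext p
  induction p using Sym2.ind
  simp only [mk_mem_distinctPairs, mem_erase, mem_filter, Sym2.mem_iff]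
  grind

lemma card_filter_mem_of_mem_distinctPairs (hp : p ∈ distinctPairs s) : #{x ∈ s | x ∈ p} = 2 := by
  induction p using Sym2.ind with
  | _ u w =>
    obtain ⟨hu, hw, huw⟩ := mk_mem_distinctPairs.mp hp
    have : {x ∈ s | x ∈ s(u, w)} = {u, w} := by
      ext x
      simp only [mem_filter, Sym2.mem_iff, mem_insert, mem_singleton]
      grind
    rw [this, card_pair huw]

def core (H : FinHypergraph α) (p : Sym2 α) : Finset α :=
  {x ∈ H.verts | x ∉ p ∧ ∀ e ∈ H.edges, p ∈ e.sym2 → x ∈ e}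

lemma core_subset : H.core p ⊆ H.verts := filter_subset _ _

@[simp]
lemma mem_core_mk : x ∈ H.core s(u, w) ↔
    x ∈ H.verts ∧ x ≠ u ∧ x ≠ w ∧ ∀ e ∈ H.edges, u ∈ e → w ∈ e → x ∈ e := by
  simp [core, and_assoc]

lemma core_mk_subset (he₁ : e₁ ∈ H.edges) (he₂ : e₂ ∈ H.edges) (hu₁ : u ∈ e₁) (hw₁ : w ∈ e₁)
    (hu₂ : u ∈ e₂) (hw₂ : w ∈ e₂) : H.core s(u, w) ⊆ (e₁ ∩ e₂) \ {u, w} := by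
  intro x hx
  obtain ⟨-, hxu, hxw, hx⟩ := mem_core_mk.mp hx
  simp [hxu, hxw, hx e₁ he₁ hu₁ hw₁, hx e₂ he₂ hu₂ hw₂]

lemma card_core_mk_le (he₁ : e₁ ∈ H.edges) (he₂ : e₂ ∈ H.edges) (hu₁ : u ∈ e₁) (hw₁ : w ∈ e₁)
    (hu₂ : u ∈ e₂) (hw₂ : w ∈ e₂) (huw : u ≠ w) : #(H.core s(u, w)) ≤ #(e₁ ∩ e₂) - 2 := by
  have hsub : {u, w} ⊆ e₁ ∩ e₂ := by simp [insert_subset_iff, *]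
  calc #(H.core s(u, w)) ≤ #((e₁ ∩ e₂) \ {u, w}) :=
        card_le_card (core_mk_subset he₁ he₂ hu₁ hw₁ hu₂ hw₂)
    _ = #(e₁ ∩ e₂) - 2 := by rw [card_sdiff_of_subset hsub, card_pair huw]

lemma dist_le_diam (hu : u ∈ H.verts) (hw : w ∈ H.verts) : H.dist u w ≤ H.diam := by
  rcases eq_or_ne u w with rfl | huw
  · simp [dist]
  · exact le_sup (f := fun p => H.dist p.1 p.2) (b := (u, w)) (mem_offDiag.mpr ⟨hu, hw, huw⟩)

lemma adj_of_diam_eq_one (hc : H.Connected) (hd : H.diam = 1) (hu : u ∈ H.verts)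
    (hw : w ∈ H.verts) (huw : u ≠ w) : H.twoSection.Adj u w := by
  have hle := hd ▸ dist_le_diam hu hw
  have hpos := (hc u hu w hw).pos_dist_of_ne huw
  exact SimpleGraph.dist_eq_one_iff_adj.mp (by unfold dist at hle; omega)

lemma delete_adj_iff (hv : v ∈ H.verts) (hu : u ≠ v) (hw : w ≠ v) :
    (H.delete v).twoSection.Adj u w ↔ u ≠ w ∧ v ∉ H.core s(u, w) := by
  simp only [twoSection, delete, mem_filter, mem_core_mk, hv]
  grind

lemma delete_dist_eq (hc : (H.delete v).Connected) (hd : (H.delete v).diam = 2)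
    (hv : v ∈ H.verts) (hp : s(u, w) ∈ distinctPairs (H.verts.erase v)) :
    (H.delete v).dist u w = 1 + if v ∈ H.core s(u, w) then 1 else 0 := by
  obtain ⟨hu, hw, huw⟩ := mk_mem_distinctPairs.mp hp
  have hle := hd ▸ dist_le_diam (H := H.delete v) hu hw
  have hadj := delete_adj_iff hv (ne_of_mem_erase hu) (ne_of_mem_erase hw) (w := w)
  split_ifs with hcore
  · exact (hc u hu w hw).dist_eq_two_of_not_adj huw (by simp [hadj, hcore]) hle
  · exact SimpleGraph.dist_eq_one_iff_adj.mpr (hadj.mpr ⟨huw, hcore⟩)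

lemma wiener_eq_sum (f : Sym2 α → ℕ)
    (hf : ∀ u w, s(u, w) ∈ distinctPairs H.verts → H.dist u w = f s(u, w)) :
    H.wiener = ∑ p ∈ distinctPairs H.verts, f p := by
  refine sum_congr rfl fun p hp => ?_
  induction p using Sym2.ind with
  | _ u w => exact hf u w hp

lemma wiener_eq_card_of_diam_eq_one (hc : H.Connected) (hd : H.diam = 1) :
    H.wiener = #(distinctPairs H.verts) := by
  rw [card_eq_sum_ones]
  refine wiener_eq_sum _ fun u w hp => ?_
  obtain ⟨hu, hw, huw⟩ := mk_mem_distinctPairs.mp hp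
  exact SimpleGraph.dist_eq_one_iff_adj.mpr (adj_of_diam_eq_one hc hd hu hw huw)

lemma wiener_delete_eq (hc : (H.delete v).Connected) (hd : (H.delete v).diam = 2)
    (hv : v ∈ H.verts) :
    (H.delete v).wiener =
      #(distinctPairs (H.verts.erase v)) + #{p ∈ distinctPairs H.verts | v ∈ H.core p} := by
  rw [wiener_eq_sum (H := H.delete v) (fun p => 1 + if v ∈ H.core p then 1 else 0)
      fun u w hp => delete_dist_eq hc hd hv hp,
    sum_add_distrib, sum_boole, ← card_eq_sum_ones, Nat.cast_id]
  congr 1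
  rw [delete, distinctPairs_erase, filter_filter]
  congr 1
  exact filter_congr fun p _ => and_iff_right_of_imp fun hp => (mem_filter.mp hp).2.1

lemma card_filter_mem_core_eq_card_filter_mem (h : H.IsSoltes) (hd₁ : H.diam = 1)
    (hd₂ : (H.delete v).diam = 2) (hv : v ∈ H.verts) :
    #{p ∈ distinctPairs H.verts | v ∈ H.core p} = #{p ∈ distinctPairs H.verts | v ∈ p} := by
  have hW := (h.2.2 v hv).2
  rw [wiener_delete_eq (h.2.2 v hv).1 hd₂ hv, wiener_eq_card_of_diam_eq_one h.2.1 hd₁,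
    distinctPairs_erase] at hW
  have := card_filter_add_card_filter_not (s := distinctPairs H.verts) (p := (v ∈ ·))
  omega

lemma sum_card_core (h : H.IsSoltes) (hd₁ : H.diam = 1)
    (hd₂ : ∀ v ∈ H.verts, (H.delete v).diam = 2) :
    ∑ p ∈ distinctPairs H.verts, #(H.core p) = ∑ _ ∈ distinctPairs H.verts, 2 :=
  calc ∑ p ∈ distinctPairs H.verts, #(H.core p)
      = ∑ p ∈ distinctPairs H.verts, #{v ∈ H.verts | v ∈ H.core p} := by
        refine sum_congr rfl fun _ _ => ?_
        rw [filter_mem_eq_inter, inter_eq_right.mpr core_subset]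
    _ = ∑ v ∈ H.verts, #{p ∈ distinctPairs H.verts | v ∈ H.core p} :=
        (sum_card_bipartiteAbove_eq_sum_card_bipartiteBelow _).symm
    _ = ∑ v ∈ H.verts, #{p ∈ distinctPairs H.verts | v ∈ p} :=
        sum_congr rfl fun v hv => card_filter_mem_core_eq_card_filter_mem h hd₁ (hd₂ v hv) hv
    _ = ∑ p ∈ distinctPairs H.verts, #{v ∈ H.verts | v ∈ p} :=
        sum_card_bipartiteAbove_eq_sum_card_bipartiteBelow _
    _ = ∑ _ ∈ distinctPairs H.verts, 2 :=
        sum_congr rfl fun p hp => card_filter_mem_of_mem_distinctPairs hp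

lemma card_core_le_two (h4 : ∀ e ∈ H.edges, #e ≤ 4) (hc : H.Connected) (hd : H.diam = 1)
    (hp : p ∈ distinctPairs H.verts) : #(H.core p) ≤ 2 := by
  induction p using Sym2.ind with
  | _ u w =>
    obtain ⟨hu, hw, huw⟩ := mk_mem_distinctPairs.mp hp
    obtain ⟨-, e, he, hue, hwe⟩ := adj_of_diam_eq_one hc hd hu hw huw
    have := card_core_mk_le he he hue hwe hue hwe huw
    rw [inter_self] at this
    have := h4 e he
    omega

lemma card_core_eq_two (h : H.IsSoltes) (h4 : ∀ e ∈ H.edges, #e ≤ 4) (hd₁ : H.diam = 1)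
    (hd₂ : ∀ v ∈ H.verts, (H.delete v).diam = 2) (hp : p ∈ distinctPairs H.verts) :
    #(H.core p) = 2 :=
  (sum_eq_sum_iff_of_le fun _ hq => card_core_le_two h4 h.2.1 hd₁ hq).mp
    (sum_card_core h hd₁ hd₂) p hp

end FinHypergraph

open FinHypergraph in
theorem stmt10 {α : Type*} [DecidableEq α] (H : FinHypergraph α)
    (h : H.IsSoltes) (h4 : ∀ e ∈ H.edges, e.card = 4)
    (hd1 : H.diam = 1) (hd2 : ∀ v ∈ H.verts, (H.delete v).diam = 2) :
    ∀ u ∈ H.verts, ∀ w ∈ H.verts, u ≠ w →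
      (H.edges.filter fun e => u ∈ e ∧ w ∈ e).card = 1 := by
  intro u hu w hw huw
  obtain ⟨-, e, he, hue, hwe⟩ := adj_of_diam_eq_one h.2.1 hd1 hu hw huw
  refine le_antisymm (card_le_one.mpr fun e₁ he₁ e₂ he₂ => ?_)
    (card_pos.mpr ⟨e, mem_filter.mpr ⟨he, hue, hwe⟩⟩)
  rw [mem_filter] at he₁ he₂
  by_contra hne
  have hcore := card_core_eq_two h (fun e he => (h4 e he).le) hd1 hd2 (mk_mem_distinctPairs.mpr ⟨hu, hw, huw⟩)
  have hle := card_core_mk_le he₁.1 he₂.1 he₁.2.1 he₁.2.2 he₂.2.1 he₂.2.2 huw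
  have hlt := card_inter_lt_of_card_eq hne ((h4 e₁ he₁.1).trans (h4 e₂ he₂.1).symm)
  rw [h4 e₁ he₁.1] at hlt
  omega
end

section
/- Every vertex of a Šoltés hypergraph belongs to at least 2 edges, i.e., every Šoltés hypergraph has minimum degree at least 2. -/
variable {α : Type*} {β : Type*}

/-!
A vertex `v` of degree at most one lies, by connectivity, in a unique edge `e`; pick `u ≠ v` in `e`.
Deleting `u` removes `e` and leaves `v` isolated, so `H \ u` can only be connected if `v` is its
only vertex. But a Šoltés hypergraph has at least three vertices: on two vertices, deleting one
leaves Wiener index `0`, while the original has positive Wiener index.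
-/

namespace FinHypergraph

theorem Connected.exists_edge_mem {H : FinHypergraph α} (hc : H.Connected) {v w : α}
    (hv : v ∈ H.verts) (hw : w ∈ H.verts) (hvw : v ≠ w) : ∃ e ∈ H.edges, v ∈ e := by
  obtain ⟨p⟩ := hc v hv w hw
  cases p with
  | nil => exact absurd rfl hvw
  | cons hadj _ =>
    obtain ⟨-, e, he, hve, -⟩ := hadj
    exact ⟨e, he, hve⟩

variable [DecidableEq α] (H : FinHypergraph α)

theorem degree_pos_iff {v : α} : 0 < H.degree v ↔ ∃ e ∈ H.edges, v ∈ e := by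
  simp only [degree, Finset.card_pos, Finset.filter_nonempty_iff]

theorem degree_delete_lt {u v : α} {e : Finset α} (he : e ∈ H.edges) (hu : u ∈ e) (hv : v ∈ e) :
    (H.delete u).degree v < H.degree v := by
  refine Finset.card_lt_card (Finset.ssubset_iff_of_subset ?_ |>.mpr ⟨e, ?_, ?_⟩)
  · intro f hf
    simp only [delete, Finset.mem_filter] at hf ⊢
    exact ⟨hf.1.1, hf.2⟩
  · exact Finset.mem_filter.mpr ⟨he, hv⟩
  · simp [delete, hu]

theorem wiener_eq_zero_of_card_le_one (h : H.verts.card ≤ 1) : H.wiener = 0 := by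
  refine Finset.sum_eq_zero fun p hp => absurd ?_ (Finset.mem_filter.mp hp).2
  induction p using Sym2.ind with
  | h a b =>
    have hab := Finset.mk_mem_sym2_iff.mp (Finset.mem_filter.mp hp).1
    exact Sym2.mk_isDiag_iff.mpr (Finset.card_le_one.mp h a hab.1 b hab.2)

theorem dist_le_wiener {u v : α} (hu : u ∈ H.verts) (hv : v ∈ H.verts) (huv : u ≠ v) :
    H.dist u v ≤ H.wiener :=
  Finset.single_le_sum (f := Sym2.lift ⟨fun a b => H.dist a b, fun _ _ => SimpleGraph.dist_comm⟩)
    (fun _ _ => Nat.zero_le _)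
    (Finset.mem_filter.mpr ⟨Finset.mk_mem_sym2_iff.mpr ⟨hu, hv⟩, Sym2.mk_isDiag_iff.not.mpr huv⟩)

variable {H}

theorem Connected.wiener_pos (hc : H.Connected) {u v : α} (hu : u ∈ H.verts) (hv : v ∈ H.verts)
    (huv : u ≠ v) : 0 < H.wiener :=
  ((hc u hu v hv).pos_dist_of_ne huv).trans_le (H.dist_le_wiener hu hv huv)

theorem IsSoltes.three_le_card (h : H.IsSoltes) : 3 ≤ H.verts.card := by
  obtain ⟨hcard, hc, hdel⟩ := h
  obtain ⟨v, hv⟩ := Finset.card_pos.mp (by omega : 0 < H.verts.card)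
  obtain ⟨u, hu, huv⟩ := Finset.exists_mem_ne hcard v
  by_contra! hlt
  have hdel_card : (H.delete v).verts.card ≤ 1 := by
    simp only [delete, Finset.card_erase_of_mem hv]
    omega
  have hW := (hdel v hv).2
  rw [wiener_eq_zero_of_card_le_one _ hdel_card] at hW
  exact (hc.wiener_pos hu hv huv).ne' hW.symm

end FinHypergraph

open FinHypergraph in
theorem stmt13 {α : Type*} [DecidableEq α] (H : FinHypergraph α) (h : H.IsSoltes) :
    ∀ v ∈ H.verts, 2 ≤ H.degree v := by
  intro v hv
  by_contra! hlt
  obtain ⟨w₀, hw₀, hw₀v⟩ := Finset.exists_mem_ne h.1 v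
  obtain ⟨e, he, hve⟩ := h.2.1.exists_edge_mem hv hw₀ hw₀v.symm
  obtain ⟨u, hue, huv⟩ := Finset.exists_mem_ne (H.edge_card e he) v
  obtain ⟨w, hw, hwuv⟩ : ∃ w ∈ H.verts, w ∉ ({u, v} : Finset α) :=
    Finset.exists_mem_notMem_of_card_lt_card
      (Finset.card_le_two.trans_lt h.three_le_card)
  simp only [Finset.mem_insert, Finset.mem_singleton, not_or] at hwuv
  have hv' : v ∈ (H.delete u).verts := Finset.mem_erase.mpr ⟨huv.symm, hv⟩
  have hw' : w ∈ (H.delete u).verts := Finset.mem_erase.mpr ⟨hwuv.1, hw⟩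
  have hdeg_delete : 0 < (H.delete u).degree v :=
    (degree_pos_iff _).mpr <|
      (h.2.2 u (H.edge_sub e he hue)).1.exists_edge_mem hv' hw' (Ne.symm hwuv.2)
  have hdeg_lt := H.degree_delete_lt he hue hve
  omega
end

section
/- If H is a Šoltés hypergraph with m edges and maximum degree Δ (the maximum over all vertices of the number of edges containing that vertex), then m ≥ Δ + 2. -/
variable {α : Type*} {β : Type*}

/-!
Let `v` be a vertex of maximum degree `Δ`; the edges of `H` split into the `Δ` edges through `v`
and the edges of `H \ v`, so it suffices that `H \ v` has at least two edges. A connected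
hypergraph with at most one edge has all its vertices in that edge, so its Wiener index is just
the number of pairs of vertices. If `H \ v` had at most one edge, its Wiener index would thus be
the number of pairs in `V \ {v}`, strictly fewer than the pairs in `V`, which bound `W(H)` from
below since distances in a connected hypergraph are at least one; this contradicts
`W(H \ v) = W(H)`.
-/

open Finset

theorem Finset.card_sym2_filter_not_isDiag_erase_lt [DecidableEq α] {s : Finset α} {u v : α}
    (hu : u ∈ s) (hv : v ∈ s) (huv : u ≠ v) :
    #((s.erase v).sym2.filter fun p => ¬ p.IsDiag) < #(s.sym2.filter fun p => ¬ p.IsDiag) := by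
  refine card_lt_card ⟨filter_subset_filter _ (sym2_mono (erase_subset v s)), fun hsub => ?_⟩
  have huv_mem : s(u, v) ∈ s.sym2.filter fun p => ¬ p.IsDiag := by
    simp [hu, hv, huv]
  simpa using (mem_filter.mp (hsub huv_mem)).1

namespace FinHypergraph

theorem exists_edge_mem_of_reachable_of_ne {H : FinHypergraph α} {a b : α}
    (hab : H.twoSection.Reachable a b) (hne : a ≠ b) : ∃ e ∈ H.edges, a ∈ e := by
  obtain ⟨p⟩ := hab
  cases p with
  | nil => exact absurd rfl hne
  | cons hadj _ =>
    obtain ⟨-, e, he, hae, -⟩ := hadj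
    exact ⟨e, he, hae⟩

theorem Connected.adj_of_card_edges_le_one {H : FinHypergraph α} (hH : H.Connected)
    (hedges : #H.edges ≤ 1) {a b : α} (ha : a ∈ H.verts) (hb : b ∈ H.verts) (hab : a ≠ b) :
    H.twoSection.Adj a b := by
  obtain ⟨e, he, hae⟩ := exists_edge_mem_of_reachable_of_ne (hH a ha b hb) hab
  obtain ⟨f, hf, hbf⟩ := exists_edge_mem_of_reachable_of_ne (hH b hb a ha) hab.symm
  obtain rfl : f = e := card_le_one_iff.mp hedges hf he
  exact ⟨hab, f, hf, hae, hbf⟩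

variable [DecidableEq α]

theorem card_pairs_le_wiener {H : FinHypergraph α} (hH : H.Connected) :
    #(H.verts.sym2.filter fun p => ¬ p.IsDiag) ≤ H.wiener := by
  rw [wiener, card_eq_sum_ones]
  refine sum_le_sum fun p hp => ?_
  induction p using Sym2.ind with
  | _ a b =>
    simp only [mem_filter, mk_mem_sym2_iff, Sym2.mk_isDiag_iff] at hp
    exact (hH a hp.1.1 b hp.1.2).pos_dist_of_ne hp.2

theorem wiener_eq_card_pairs_of_card_edges_le_one {H : FinHypergraph α} (hH : H.Connected)
    (hedges : #H.edges ≤ 1) :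
    H.wiener = #(H.verts.sym2.filter fun p => ¬ p.IsDiag) := by
  rw [wiener, card_eq_sum_ones]
  refine sum_congr rfl fun p hp => ?_
  induction p using Sym2.ind with
  | _ a b =>
    simp only [mem_filter, mk_mem_sym2_iff, Sym2.mk_isDiag_iff] at hp
    exact SimpleGraph.dist_eq_one_iff_adj.mpr
      (hH.adj_of_card_edges_le_one hedges hp.1.1 hp.1.2 hp.2)

theorem degree_add_card_edges_delete (H : FinHypergraph α) (v : α) :
    H.degree v + #(H.delete v).edges = #H.edges :=
  card_filter_add_card_filter_not _

theorem IsSoltes.two_le_card_edges_delete {H : FinHypergraph α} (hH : H.IsSoltes) {v : α}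
    (hv : v ∈ H.verts) : 2 ≤ #(H.delete v).edges := by
  obtain ⟨hcard, hconn, hdel⟩ := hH
  obtain ⟨hconn', hwiener⟩ := hdel v hv
  obtain ⟨u, hu, huv⟩ := exists_mem_ne hcard v
  by_contra! hedges
  have hlt := calc
    H.wiener = (H.delete v).wiener := hwiener.symm
    _ = #((H.verts.erase v).sym2.filter fun p => ¬ p.IsDiag) :=
      wiener_eq_card_pairs_of_card_edges_le_one hconn' (Nat.le_of_lt_succ hedges)
    _ < #(H.verts.sym2.filter fun p => ¬ p.IsDiag) :=
      card_sym2_filter_not_isDiag_erase_lt hu hv huv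
    _ ≤ H.wiener := card_pairs_le_wiener hconn
  exact lt_irrefl _ hlt

end FinHypergraph

theorem stmt14 {α : Type*} [DecidableEq α] (H : FinHypergraph α) (h : H.IsSoltes) :
    H.verts.sup H.degree + 2 ≤ H.edges.card := by
  obtain ⟨v, hv, hsup⟩ :=
    exists_mem_eq_sup H.verts (card_pos.mp (zero_lt_two.trans_le h.1)) H.degree
  rw [hsup, ← H.degree_add_card_edges_delete v]
  have := h.two_le_card_edges_delete hv
  omega
end

section
/- In a Šoltés hypergraph of order at least 3, no two distinct vertices are contained in exactly the same set of edges. -/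
variable {α : Type*} {β : Type*}

/-- A hypergraph: a finite vertex set together with a set of edges,
each an at-least-2-element subset of the vertex set. -/
structure Hypergraph' (α : Type*) where
  verts : Finset α
  edges : Finset (Finset α)
  edge_sub : ∀ e ∈ edges, e ⊆ verts
  edge_card : ∀ e ∈ edges, 2 ≤ e.card

namespace Hypergraph'

/-- The 2-section graph of a hypergraph: two distinct vertices are adjacent
iff some edge contains both. -/
def twoSection (H : Hypergraph' α) : SimpleGraph α where
  Adj u v := u ≠ v ∧ ∃ e ∈ H.edges, u ∈ e ∧ v ∈ e
  symm := by
    refine ⟨?_⟩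
    rintro u v ⟨huv, e, he, hu, hv⟩
    exact ⟨huv.symm, e, he, hv, hu⟩
  loopless := by
    refine ⟨?_⟩
    rintro u ⟨h, -⟩
    exact h rfl

/-- Distance between two vertices: graph distance in the 2-section. -/
noncomputable def dist (H : Hypergraph' α) (u v : α) : ℕ :=
  H.twoSection.dist u v

/-- A hypergraph is connected if every two of its vertices are joined by a path. -/
def Connected (H : Hypergraph' α) : Prop :=
  ∀ u ∈ H.verts, ∀ v ∈ H.verts, H.twoSection.Reachable u v

/-- The Wiener index (total distance): the sum of distances over all
unordered pairs of distinct vertices. -/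
noncomputable def wiener [DecidableEq α] (H : Hypergraph' α) : ℕ :=
  ∑ p ∈ H.verts.sym2.filter (fun p => ¬ p.IsDiag),
    Sym2.lift ⟨fun u v => H.dist u v, fun _ _ => SimpleGraph.dist_comm⟩ p

/-- Vertex deletion: remove the vertex and all edges containing it. -/
def delete [DecidableEq α] (H : Hypergraph' α) (v : α) : Hypergraph' α where
  verts := H.verts.erase v
  edges := H.edges.filter fun e => v ∉ e
  edge_sub := by
    intro e he x hx
    rw [Finset.mem_filter] at he
    exact Finset.mem_erase.mpr ⟨fun h => he.2 (h ▸ hx), H.edge_sub e he.1 hx⟩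
  edge_card := fun e he => H.edge_card e (Finset.mem_filter.mp he).1

/-- A Šoltés hypergraph: a connected hypergraph on at least 2 vertices such that
deleting any vertex leaves a connected hypergraph with the same Wiener index. -/
def IsSoltes [DecidableEq α] (H : Hypergraph' α) : Prop :=
  2 ≤ H.verts.card ∧ H.Connected ∧
    ∀ v ∈ H.verts, (H.delete v).Connected ∧ (H.delete v).wiener = H.wiener

/-- The diameter: the maximum distance over unordered pairs of distinct vertices. -/
noncomputable def diam [DecidableEq α] (H : Hypergraph' α) : ℕ :=
  H.verts.offDiag.sup fun p => H.dist p.1 p.2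

/-- The degree of a vertex: the number of edges containing it. -/
def degree [DecidableEq α] (H : Hypergraph' α) (v : α) : ℕ :=
  (H.edges.filter fun e => v ∈ e).card

/-- Hypergraph' isomorphism: a bijection between the vertex sets mapping
edges onto edges. -/
def IsIsoTo [DecidableEq β] (H : Hypergraph' α) (H' : Hypergraph' β) : Prop :=
  ∃ f : α → β, Set.InjOn f ↑H.verts ∧ H'.verts = H.verts.image f ∧
    H'.edges = H.edges.image fun e => e.image f

end Hypergraph'

namespace Hypergraph'

variable {H : Hypergraph' α}

theorem Connected.exists_mem_edge (hH : H.Connected) {v x : α} (hv : v ∈ H.verts)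
    (hx : x ∈ H.verts) (hxv : x ≠ v) : ∃ e ∈ H.edges, v ∈ e := by
  obtain ⟨p⟩ := hH v hv x hx
  obtain ⟨-, e, he, hve, -⟩ := p.adj_snd (SimpleGraph.Walk.not_nil_of_ne hxv.symm)
  exact ⟨e, he, hve⟩

theorem exists_mem_edge_not_mem_of_connected_delete [DecidableEq α] {u v : α}
    (hconn : (H.delete u).Connected) (h3 : 3 ≤ H.verts.card) (hu : u ∈ H.verts)
    (hv : v ∈ H.verts) (huv : u ≠ v) : ∃ e ∈ H.edges, v ∈ e ∧ u ∉ e := by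
  have hv' : v ∈ (H.delete u).verts := Finset.mem_erase.mpr ⟨huv.symm, hv⟩
  have hcard : 1 < (H.delete u).verts.card := by
    rw [delete, Finset.card_erase_of_mem hu]
    omega
  obtain ⟨x, hx, hxv⟩ := Finset.exists_mem_ne hcard v
  obtain ⟨e, he, hve⟩ := hconn.exists_mem_edge hv' hx hxv
  obtain ⟨heH, hue⟩ := Finset.mem_filter.mp he
  exact ⟨e, heH, hve, hue⟩

end Hypergraph'

theorem stmt15 {α : Type*} [DecidableEq α] (H : Hypergraph' α) (h : H.IsSoltes)
    (h3 : 3 ≤ H.verts.card) :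
    ∀ u ∈ H.verts, ∀ v ∈ H.verts, u ≠ v →
      (H.edges.filter fun e => u ∈ e) ≠ (H.edges.filter fun e => v ∈ e) := by
  intro u hu v hv huv hsame
  obtain ⟨e, he, hve, hue⟩ :=
    H.exists_mem_edge_not_mem_of_connected_delete (h.2.2 u hu).1 h3 hu hv huv
  have he_u : e ∈ H.edges.filter fun e => u ∈ e := hsame ▸ Finset.mem_filter.mpr ⟨he, hve⟩
  exact hue (Finset.mem_filter.mp he_u).2
end
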